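/- arXiv:2103.15161 — 5 statements merged into one kernel-verified Lean document; each statement's English description precedes it below -/
import Mathlib

section
/- Let n ≥ 3 and let D_{2n} = ⟨a, b : aⁿ = b² = 1, b⁻¹ab = a⁻¹⟩ be the dihedral group of order 2n. Then f_3(1) = n³ + 7n if n is odd, and f_3(1) = n³ + 28n if n is even. -/
/-- the number of ordered triples `(x,y,z)` with `[x,y] = [x,z] = [y,z] = g`,
where `[x,y] = x⁻¹y⁻¹xy`. -/
noncomputable def f3 {G : Type*} [Group G] (g : G) : ℕ :=
  Nat.card {t : G × G × G //
    t.1⁻¹ * t.2.1⁻¹ * t.1 * t.2.1 = g ∧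
    t.1⁻¹ * t.2.2⁻¹ * t.1 * t.2.2 = g ∧
    t.2.1⁻¹ * t.2.2⁻¹ * t.2.1 * t.2.2 = g}
open Finset DihedralGroup

section aux

variable {n : ℕ} [NeZero n]

set_option linter.unusedSectionVars false

lemma inv_r (i : ZMod n) : (r i)⁻¹ = r (-i) := rfl
lemma inv_sr (i : ZMod n) : (sr i)⁻¹ = sr i := rfl

/-- the 2-torsion finset of `ZMod n`. -/
def Tors (n : ℕ) [NeZero n] : Finset (ZMod n) := Finset.univ.filter (fun i => i + i = 0)

def dEquiv (n : ℕ) : (ZMod n) ⊕ (ZMod n) ≃ DihedralGroup n where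
  toFun i := match i with
    | Sum.inl j => r j
    | Sum.inr j => sr j
  invFun i := match i with
    | r j => Sum.inl j
    | sr j => Sum.inr j
  left_inv := by rintro (x | x) <;> rfl
  right_inv := by rintro (x | x) <;> rfl

lemma sum_dihedral {M : Type*} [AddCommMonoid M] (f : DihedralGroup n → M) :
    ∑ x, f x = (∑ i : ZMod n, f (r i)) + ∑ i : ZMod n, f (sr i) := by
  rw [← Fintype.sum_equiv (dEquiv n) (fun s => f (dEquiv n s)) f (fun s => rfl),
    Fintype.sum_sum_type]
  rfl

-- normalization lemmas
lemma L1 (a b : ZMod n) : -a + -b + a + b = 0 := by ring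
lemma L2 (c a : ZMod n) : c - (c - -a + a) = -(a + a) := by ring
lemma L3 (a b : ZMod n) : a - (a + -b) + b = b + b := by ring
lemma L4 (a b : ZMod n) : b - (a - (b - a)) = (b - a) + (b - a) := by ring

lemma AD1 (p q : Prop) : (p ∧ q ∧ p) ↔ (p ∧ q) := by tauto
lemma AD2 (p q : Prop) : (p ∧ p ∧ q) ↔ (p ∧ q) := by tauto
lemma AD3 (p q : Prop) : (p ∧ q ∧ q) ↔ (p ∧ q) := by tauto

lemma T8iff (x y z : ZMod n) :
    ((y - x) + (y - x) = 0 ∧ (z - x) + (z - x) = 0 ∧ (z - y) + (z - y) = 0) ↔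
      ((y - x) + (y - x) = 0 ∧ (z - x) + (z - x) = 0) := by
  constructor
  · rintro ⟨h1, h2, _⟩; exact ⟨h1, h2⟩
  · rintro ⟨h1, h2⟩; exact ⟨h1, h2, by linear_combination h2 - h1⟩

-- counting helpers
lemma Hsolo (c : ℕ) : (∑ z : ZMod n, if z + z = 0 then c else 0) = (Tors n).card * c := by
  rw [Tors, ← Finset.sum_filter, Finset.sum_const, smul_eq_mul]

lemma Hsolo' (a : ZMod n) (c : ℕ) :
    (∑ z : ZMod n, if (z - a) + (z - a) = 0 then c else 0) = (Tors n).card * c := by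
  rw [← Hsolo c]
  exact Fintype.sum_equiv (Equiv.subRight a) _ _ (fun k => rfl)

lemma H (p : Prop) [Decidable p] (c : ℕ) :
    (∑ z : ZMod n, if p ∧ z + z = 0 then c else 0) = if p then (Tors n).card * c else 0 := by
  by_cases hp : p <;> simp [hp, Hsolo]

lemma H' (p : Prop) [Decidable p] (a : ZMod n) (c : ℕ) :
    (∑ z : ZMod n, if p ∧ (z - a) + (z - a) = 0 then c else 0) =
      if p then (Tors n).card * c else 0 := by
  by_cases hp : p <;> simp [hp, Hsolo']

lemma Hc (p : Prop) [Decidable p] (c : ℕ) :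
    (∑ _z : ZMod n, if p then c else 0) = if p then n * c else 0 := by
  by_cases hp : p <;> simp [hp, Finset.sum_const, mul_comm, ZMod.card]

end aux

lemma f3_one (n : ℕ) [NeZero n] :
    f3 (1 : DihedralGroup n) = n ^ 3 + 7 * n * (Tors n).card ^ 2 := by
  classical
  rw [f3, Nat.card_eq_fintype_card, Fintype.card_subtype, Finset.card_filter,
    Fintype.sum_prod_type]
  simp only [Fintype.sum_prod_type]
  simp only [sum_dihedral]
  simp only [inv_r, inv_sr, r_mul_r, r_mul_sr, sr_mul_r, sr_mul_sr, one_def, r.injEq]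
  simp only [L1, L2, L3, L4, neg_eq_zero, eq_self_iff_true, true_and, and_true,
    AD1, AD2, AD3, T8iff]
  simp only [Finset.sum_add_distrib, Hc, H, H', Hsolo, Hsolo', if_true, Finset.sum_const, smul_eq_mul, mul_ite,
    mul_zero, mul_one, card_univ, ZMod.card]
  ring

lemma tors_odd (n : ℕ) [NeZero n] (h : Odd n) : (Tors n).card = 1 := by
  have h2 : IsUnit (2 : ZMod n) :=
    (ZMod.isUnit_iff_coprime 2 n).mpr (Nat.coprime_two_left.mpr h)
  have hT : Tors n = {0} := by
    ext i
    simp only [Tors, Finset.mem_filter, Finset.mem_univ, true_and, Finset.mem_singleton]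
    constructor
    · intro hi
      have h2i : (2 : ZMod n) * i = 0 := by linear_combination hi
      exact (IsUnit.mul_right_eq_zero h2).mp h2i
    · rintro rfl; simp
  rw [hT, Finset.card_singleton]

lemma tors_even (n : ℕ) [NeZero n] (hn : 3 ≤ n) (h : Even n) : (Tors n).card = 2 := by
  obtain ⟨m, hm⟩ := h
  have hm0 : 0 < m := by omega
  have hmn : m < n := by omega
  have hmne : ((m : ZMod n)) ≠ 0 := by
    rw [Ne, ZMod.natCast_eq_zero_iff]
    intro hdvd
    exact absurd (Nat.le_of_dvd hm0 hdvd) (by omega)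
  have hT : Tors n = {0, (m : ZMod n)} := by
    ext i
    simp only [Tors, Finset.mem_filter, Finset.mem_univ, true_and, Finset.mem_insert,
      Finset.mem_singleton]
    constructor
    · intro hi
      have hv : ((i.val + i.val : ℕ) : ZMod n) = 0 := by
        push_cast
        rw [ZMod.natCast_rightInverse i]
        exact hi
      rw [ZMod.natCast_eq_zero_iff] at hv
      have hvlt : i.val < n := ZMod.val_lt i
      have : i.val + i.val = 0 ∨ i.val + i.val = n := by
        rcases hv with ⟨k, hk⟩
        have hk2 : n * k < n * 2 := by omega
        have hklt : k < 2 := Nat.lt_of_mul_lt_mul_left hk2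
        interval_cases k <;> omega
      rcases this with h0 | h1
      · left
        have : i.val = 0 := by omega
        rw [← ZMod.natCast_rightInverse i, this, Nat.cast_zero]
      · right
        have : i.val = m := by omega
        rw [← ZMod.natCast_rightInverse i, this]
    · rintro (rfl | rfl)
      · simp
      · have : ((m : ZMod n)) + m = ((m + m : ℕ) : ZMod n) := by push_cast; ring
        rw [this, ← hm, ZMod.natCast_self]
  rw [hT, Finset.card_insert_of_notMem (by simpa using hmne.symm), Finset.card_singleton]

theorem stmt13 (n : ℕ) (hn : 3 ≤ n) :
    (Odd n → f3 (1 : DihedralGroup n) = n ^ 3 + 7 * n) ∧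
    (Even n → f3 (1 : DihedralGroup n) = n ^ 3 + 28 * n) := by
  haveI : NeZero n := ⟨by omega⟩
  constructor
  · intro h
    rw [f3_one, tors_odd n h]
    ring
  · intro h
    rw [f3_one, tors_even n hn h]
    ring
end

section
/- Let n ≥ 3 and let D_{2n} = ⟨a, b : aⁿ = b² = 1, b⁻¹ab = a⁻¹⟩ be the dihedral group of order 2n. For any integer s with 0 < s < n/2: f_3(a^{2s}) = 2n if n is odd; f_3(a^{2s}) = 8n if n is even and s ≠ n/4; and f_3(a^{2s}) = 12n if n is even and s = n/4. -/
namespace DihedralAux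

open DihedralGroup

variable {n : ℕ}

lemma r_inv (i : ZMod n) : (r i)⁻¹ = r (-i) := rfl

lemma sr_inv (i : ZMod n) : (sr i)⁻¹ = sr i := rfl

lemma comm_rr (i j : ZMod n) : (r i)⁻¹ * (r j)⁻¹ * r i * r j = r 0 := by
  simp only [r_inv, r_mul_r]
  congr 1; ring

lemma comm_rsr (i j : ZMod n) : (r i)⁻¹ * (sr j)⁻¹ * r i * sr j = r (-(2 * i)) := by
  simp only [r_inv, sr_inv, r_mul_sr, sr_mul_r, sr_mul_sr]
  congr 1; ring

lemma comm_srr (i j : ZMod n) : (sr i)⁻¹ * (r j)⁻¹ * sr i * r j = r (2 * j) := by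
  simp only [r_inv, sr_inv, r_mul_sr, sr_mul_r, sr_mul_sr, r_mul_r]
  congr 1; ring

lemma comm_srsr (i j : ZMod n) : (sr i)⁻¹ * (sr j)⁻¹ * sr i * sr j = r (2 * j - 2 * i) := by
  simp only [r_inv, sr_inv, r_mul_sr, sr_mul_r, sr_mul_sr, r_mul_r]
  congr 1; ring

lemma f3_eq [NeZero n] (g : DihedralGroup n) :
    f3 g = (Finset.univ.filter
      (fun t : DihedralGroup n × DihedralGroup n × DihedralGroup n =>
        t.1⁻¹ * t.2.1⁻¹ * t.1 * t.2.1 = g ∧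
        t.1⁻¹ * t.2.2⁻¹ * t.1 * t.2.2 = g ∧
        t.2.1⁻¹ * t.2.2⁻¹ * t.2.1 * t.2.2 = g)).card := by
  rw [f3, Nat.card_eq_fintype_card, Fintype.card_subtype]

lemma two_mul_injective (hodd : Odd n) (x y : ZMod n) (h : 2 * x = 2 * y) : x = y := by
  have hu : IsUnit (2 : ZMod n) := by
    have := (ZMod.isUnit_iff_coprime 2 n).mpr (Nat.coprime_two_left.mpr hodd)
    simpa using this
  exact hu.mul_left_cancel h

lemma ker_two {m : ℕ} [NeZero n] (hm : n = 2 * m) (x : ZMod n) :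
    2 * x = 0 ↔ x = 0 ∨ x = (m : ZMod n) := by
  subst hm
  have hm0 : m ≠ 0 := by rintro rfl; exact absurd rfl (NeZero.ne 0)
  constructor
  · intro h
    have hv : (2 * m : ℕ) ∣ 2 * x.val := by
      rw [← ZMod.natCast_eq_zero_iff]
      push_cast
      rw [ZMod.natCast_zmod_val]
      linear_combination h
    have hv' : m ∣ x.val := (mul_dvd_mul_iff_left (two_ne_zero)).mp hv
    obtain ⟨c, hc⟩ := hv'
    have hlt : x.val < 2 * m := ZMod.val_lt x
    have hc2 : c < 2 := by
      by_contra hcc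
      push_neg at hcc
      have h1 : m * 2 ≤ m * c := Nat.mul_le_mul_left m hcc
      omega
    interval_cases c
    · left; rw [← ZMod.natCast_zmod_val x, hc]; simp
    · right; rw [← ZMod.natCast_zmod_val x, hc]; simp
  · rintro (rfl | rfl)
    · ring
    · have hself := ZMod.natCast_self (2 * m)
      push_cast at hself
      linear_combination hself

lemma count_odd [NeZero n] (hodd : Odd n) (s' : ZMod n) (hg : 2 * s' ≠ 0) :
    f3 (r (2 * s')) = 2 * n := by
  classical
  have hinj := two_mul_injective hodd
  rw [f3_eq]
  have hset : (Finset.univ.filter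
      (fun t : DihedralGroup n × DihedralGroup n × DihedralGroup n =>
        t.1⁻¹ * t.2.1⁻¹ * t.1 * t.2.1 = r (2 * s') ∧
        t.1⁻¹ * t.2.2⁻¹ * t.1 * t.2.2 = r (2 * s') ∧
        t.2.1⁻¹ * t.2.2⁻¹ * t.2.1 * t.2.2 = r (2 * s'))) =
      (Finset.univ.image fun j : ZMod n =>
        ((r (-s') : DihedralGroup n), sr j, sr (j + s'))) ∪
      (Finset.univ.image fun i : ZMod n =>
        ((sr i : DihedralGroup n), sr (i + s'), r s')) := by
    ext t
    simp only [Finset.mem_filter, Finset.mem_univ, true_and, Finset.mem_union,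
      Finset.mem_image]
    constructor
    · rintro ⟨h1, h2, h3⟩
      obtain ⟨x, y, z⟩ := t
      dsimp only at h1 h2 h3
      rcases x with i | i <;> rcases y with j | j <;> rcases z with k | k
      · rw [comm_rr] at h1; exact absurd (r.inj h1).symm hg
      · rw [comm_rr] at h1; exact absurd (r.inj h1).symm hg
      · rw [comm_rr] at h2; exact absurd (r.inj h2).symm hg
      · rw [comm_rsr] at h1; rw [comm_srsr] at h3
        have e1 := r.inj h1
        have e3 := r.inj h3
        left
        refine ⟨j, ?_⟩
        have hi : i = -s' := hinj i (-s') (by linear_combination -e1)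
        have hk : k = j + s' := hinj k (j + s') (by linear_combination e3)
        rw [hi, hk]
      · rw [comm_rr] at h3; exact absurd (r.inj h3).symm hg
      · rw [comm_srr] at h1; rw [comm_rsr] at h3
        have e1 := r.inj h1
        have e3 := r.inj h3
        exact absurd (hinj (2 * s') 0 (by linear_combination -e1 - e3)) hg
      · rw [comm_srsr] at h1; rw [comm_srr] at h2
        have e1 := r.inj h1
        have e2 := r.inj h2
        right
        refine ⟨i, ?_⟩
        have hj : j = i + s' := hinj j (i + s') (by linear_combination e1)
        have hk : k = s' := hinj k s' (by linear_combination e2)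
        rw [hj, hk]
      · rw [comm_srsr] at h1; rw [comm_srsr] at h2; rw [comm_srsr] at h3
        have e1 := r.inj h1
        have e2 := r.inj h2
        have e3 := r.inj h3
        exact absurd (show 2 * s' = 0 by linear_combination e2 - e1 - e3) hg
    · rintro (⟨j, rfl⟩ | ⟨i, rfl⟩)
      · refine ⟨?_, ?_, ?_⟩
        · rw [comm_rsr]; congr 1; ring
        · rw [comm_rsr]; congr 1; ring
        · rw [comm_srsr]; congr 1; ring
      · refine ⟨?_, ?_, ?_⟩
        · rw [comm_srsr]; congr 1; ring
        · rw [comm_srr]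
        · rw [comm_srr]
  rw [hset]
  have hd : Disjoint
      (Finset.univ.image fun j : ZMod n =>
        ((r (-s') : DihedralGroup n), sr j, sr (j + s')))
      (Finset.univ.image fun i : ZMod n =>
        ((sr i : DihedralGroup n), sr (i + s'), r s')) := by
    rw [Finset.disjoint_left]
    rintro t ht1 ht2
    simp only [Finset.mem_image, Finset.mem_univ, true_and] at ht1 ht2
    obtain ⟨j, rfl⟩ := ht1
    obtain ⟨i, hi⟩ := ht2
    simp at hi
  have hi1 : Function.Injective fun j : ZMod n =>
      ((r (-s') : DihedralGroup n), sr j, sr (j + s')) := by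
    intro a b h
    simp only [Prod.mk.injEq, sr.injEq] at h
    exact h.2.1
  have hi2 : Function.Injective fun i : ZMod n =>
      ((sr i : DihedralGroup n), sr (i + s'), r s') := by
    intro a b h
    simp only [Prod.mk.injEq, sr.injEq] at h
    exact h.1
  rw [Finset.card_union_of_disjoint hd, Finset.card_image_of_injective _ hi1,
    Finset.card_image_of_injective _ hi2, Finset.card_univ, ZMod.card]
  ring

section Even

variable {m : ℕ} [NeZero n]

lemma m_ne (hm : n = 2 * m) : (m : ZMod n) ≠ 0 := by
  have hm0 : m ≠ 0 := by rintro rfl; exact NeZero.ne n (by omega)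
  rw [Ne, ZMod.natCast_eq_zero_iff]
  intro hd
  have := Nat.le_of_dvd (Nat.pos_of_ne_zero hm0) hd
  omega

lemma two_m (hm : n = 2 * m) : 2 * (m : ZMod n) = 0 := by
  have hself : ((2 * m : ℕ) : ZMod n) = 0 := by rw [← hm]; exact ZMod.natCast_self n
  push_cast at hself
  linear_combination hself

lemma hcond (hm : n = 2 * m) : ∀ b : Bool, 2 * (cond b (m : ZMod n) 0) = 0 := by
  intro b
  cases b
  · simp
  · simpa using two_m hm

lemma cond_injective (hm : n = 2 * m) {b d : Bool}
    (h : cond b (m : ZMod n) 0 = cond d (m : ZMod n) 0) : b = d := by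
  have := m_ne hm
  cases b <;> cases d <;> simp_all

/-- The triples with `x` a rotation and `y, z` reflections. -/
noncomputable def setA (m : ℕ) (s' : ZMod n) :
    Finset (DihedralGroup n × DihedralGroup n × DihedralGroup n) :=
  Finset.univ.image fun p : ZMod n × Bool × Bool =>
    ((r (-s' + cond p.2.1 (m : ZMod n) 0) : DihedralGroup n), sr p.1,
      sr (p.1 + s' + cond p.2.2 (m : ZMod n) 0))

/-- The triples with `y` a rotation and `x, z` reflections. -/
noncomputable def setB (m : ℕ) (s' : ZMod n) :
    Finset (DihedralGroup n × DihedralGroup n × DihedralGroup n) :=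
  Finset.univ.image fun p : ZMod n × Bool × Bool =>
    ((sr p.1 : DihedralGroup n), r (s' + cond p.2.1 (m : ZMod n) 0),
      sr (p.1 + s' + cond p.2.2 (m : ZMod n) 0))

/-- The triples with `z` a rotation and `x, y` reflections. -/
noncomputable def setC (m : ℕ) (s' : ZMod n) :
    Finset (DihedralGroup n × DihedralGroup n × DihedralGroup n) :=
  Finset.univ.image fun p : ZMod n × Bool × Bool =>
    ((sr p.1 : DihedralGroup n), sr (p.1 + s' + cond p.2.1 (m : ZMod n) 0),
      r (s' + cond p.2.2 (m : ZMod n) 0))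

lemma card_setA (hm : n = 2 * m) (s' : ZMod n) : (setA m s').card = 4 * n := by
  rw [setA, Finset.card_image_of_injective, Finset.card_univ]
  · simp [ZMod.card]; ring
  · rintro ⟨a, b1, b2⟩ ⟨c, d1, d2⟩ h
    simp only [Prod.mk.injEq, r.injEq, sr.injEq] at h
    obtain ⟨h1, h2, h3⟩ := h
    subst h2
    rw [cond_injective hm (show cond b1 (m : ZMod n) 0 = cond d1 (m : ZMod n) 0 by
        linear_combination h1),
      cond_injective hm (show cond b2 (m : ZMod n) 0 = cond d2 (m : ZMod n) 0 by
        linear_combination h3)]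

lemma card_setB (hm : n = 2 * m) (s' : ZMod n) : (setB m s').card = 4 * n := by
  rw [setB, Finset.card_image_of_injective, Finset.card_univ]
  · simp [ZMod.card]; ring
  · rintro ⟨a, b1, b2⟩ ⟨c, d1, d2⟩ h
    simp only [Prod.mk.injEq, r.injEq, sr.injEq] at h
    obtain ⟨h1, h2, h3⟩ := h
    subst h1
    rw [cond_injective hm (show cond b1 (m : ZMod n) 0 = cond d1 (m : ZMod n) 0 by
        linear_combination h2),
      cond_injective hm (show cond b2 (m : ZMod n) 0 = cond d2 (m : ZMod n) 0 by
        linear_combination h3)]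

lemma card_setC (hm : n = 2 * m) (s' : ZMod n) : (setC m s').card = 4 * n := by
  rw [setC, Finset.card_image_of_injective, Finset.card_univ]
  · simp [ZMod.card]; ring
  · rintro ⟨a, b1, b2⟩ ⟨c, d1, d2⟩ h
    simp only [Prod.mk.injEq, r.injEq, sr.injEq] at h
    obtain ⟨h1, h2, h3⟩ := h
    subst h1
    rw [cond_injective hm (show cond b1 (m : ZMod n) 0 = cond d1 (m : ZMod n) 0 by
        linear_combination h2),
      cond_injective hm (show cond b2 (m : ZMod n) 0 = cond d2 (m : ZMod n) 0 by
        linear_combination h3)]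

lemma disjAB (s' : ZMod n) : Disjoint (setA m s') (setB m s') := by
  rw [Finset.disjoint_left]
  rintro t ht1 ht2
  simp only [setA, setB, Finset.mem_image, Finset.mem_univ, true_and] at ht1 ht2
  obtain ⟨p, rfl⟩ := ht1
  obtain ⟨q, hq⟩ := ht2
  simp at hq

lemma disjAC (s' : ZMod n) : Disjoint (setA m s') (setC m s') := by
  rw [Finset.disjoint_left]
  rintro t ht1 ht2
  simp only [setA, setC, Finset.mem_image, Finset.mem_univ, true_and] at ht1 ht2
  obtain ⟨p, rfl⟩ := ht1
  obtain ⟨q, hq⟩ := ht2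
  simp at hq

lemma disjBC (s' : ZMod n) : Disjoint (setB m s') (setC m s') := by
  rw [Finset.disjoint_left]
  rintro t ht1 ht2
  simp only [setB, setC, Finset.mem_image, Finset.mem_univ, true_and] at ht1 ht2
  obtain ⟨p, rfl⟩ := ht1
  obtain ⟨q, hq⟩ := ht2
  simp at hq

lemma memA (hm : n = 2 * m) (s' : ZMod n) {i j k : ZMod n}
    (e1 : -(2 * i) = 2 * s') (e3 : 2 * k - 2 * j = 2 * s') :
    ((r i : DihedralGroup n), sr j, sr k) ∈ setA m s' := by
  have c1 := (ker_two hm (i + s')).mp (by linear_combination -e1)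
  have c3 := (ker_two hm (k - j - s')).mp (by linear_combination e3)
  simp only [setA, Finset.mem_image, Finset.mem_univ, true_and]
  rcases c1 with h1 | h1 <;> rcases c3 with h3 | h3 <;>
    [refine ⟨⟨j, false, false⟩, ?_⟩; refine ⟨⟨j, false, true⟩, ?_⟩;
     refine ⟨⟨j, true, false⟩, ?_⟩; refine ⟨⟨j, true, true⟩, ?_⟩] <;>
    simp only [Prod.mk.injEq, r.injEq, sr.injEq, Bool.cond_false, Bool.cond_true] <;>
    and_intros <;>
    first
      | trivial
      | linear_combination -h1
      | linear_combination -h3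

lemma memB (hm : n = 2 * m) (s' : ZMod n) {i j k : ZMod n}
    (e1 : 2 * j = 2 * s') (e2 : 2 * k - 2 * i = 2 * s') :
    ((sr i : DihedralGroup n), r j, sr k) ∈ setB m s' := by
  have c1 := (ker_two hm (j - s')).mp (by linear_combination e1)
  have c2 := (ker_two hm (k - i - s')).mp (by linear_combination e2)
  simp only [setB, Finset.mem_image, Finset.mem_univ, true_and]
  rcases c1 with h1 | h1 <;> rcases c2 with h2 | h2 <;>
    [refine ⟨⟨i, false, false⟩, ?_⟩; refine ⟨⟨i, false, true⟩, ?_⟩;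
     refine ⟨⟨i, true, false⟩, ?_⟩; refine ⟨⟨i, true, true⟩, ?_⟩] <;>
    simp only [Prod.mk.injEq, r.injEq, sr.injEq, Bool.cond_false, Bool.cond_true] <;>
    and_intros <;>
    first
      | trivial
      | linear_combination -h1
      | linear_combination -h2

lemma memC (hm : n = 2 * m) (s' : ZMod n) {i j k : ZMod n}
    (e1 : 2 * j - 2 * i = 2 * s') (e2 : 2 * k = 2 * s') :
    ((sr i : DihedralGroup n), sr j, r k) ∈ setC m s' := by
  have c1 := (ker_two hm (j - i - s')).mp (by linear_combination e1)
  have c2 := (ker_two hm (k - s')).mp (by linear_combination e2)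
  simp only [setC, Finset.mem_image, Finset.mem_univ, true_and]
  rcases c1 with h1 | h1 <;> rcases c2 with h2 | h2 <;>
    [refine ⟨⟨i, false, false⟩, ?_⟩; refine ⟨⟨i, false, true⟩, ?_⟩;
     refine ⟨⟨i, true, false⟩, ?_⟩; refine ⟨⟨i, true, true⟩, ?_⟩] <;>
    simp only [Prod.mk.injEq, r.injEq, sr.injEq, Bool.cond_false, Bool.cond_true] <;>
    and_intros <;>
    first
      | trivial
      | linear_combination -h1
      | linear_combination -h2


lemma count_even_ne (hm : n = 2 * m) (s' : ZMod n) (hg : 2 * s' ≠ 0)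
    (h4 : 2 * (2 * s') ≠ 0) : f3 (r (2 * s')) = 8 * n := by
  classical
  rw [f3_eq]
  have hset : (Finset.univ.filter
      (fun t : DihedralGroup n × DihedralGroup n × DihedralGroup n =>
        t.1⁻¹ * t.2.1⁻¹ * t.1 * t.2.1 = r (2 * s') ∧
        t.1⁻¹ * t.2.2⁻¹ * t.1 * t.2.2 = r (2 * s') ∧
        t.2.1⁻¹ * t.2.2⁻¹ * t.2.1 * t.2.2 = r (2 * s'))) = setA m s' ∪ setC m s' := by
    ext t
    simp only [Finset.mem_filter, Finset.mem_univ, true_and, Finset.mem_union]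
    constructor
    · rintro ⟨h1, h2, h3⟩
      obtain ⟨x, y, z⟩ := t
      dsimp only at h1 h2 h3
      rcases x with i | i <;> rcases y with j | j <;> rcases z with k | k
      · rw [comm_rr] at h1; exact absurd (r.inj h1).symm hg
      · rw [comm_rr] at h1; exact absurd (r.inj h1).symm hg
      · rw [comm_rr] at h2; exact absurd (r.inj h2).symm hg
      · rw [comm_rsr] at h1; rw [comm_srsr] at h3
        exact Or.inl (memA hm s' (r.inj h1) (r.inj h3))
      · rw [comm_rr] at h3; exact absurd (r.inj h3).symm hg
      · rw [comm_srr] at h1; rw [comm_rsr] at h3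
        have e1 := r.inj h1
        have e3 := r.inj h3
        exact absurd (show 2 * (2 * s') = 0 by linear_combination -e1 - e3) h4
      · rw [comm_srsr] at h1; rw [comm_srr] at h2
        exact Or.inr (memC hm s' (r.inj h1) (r.inj h2))
      · rw [comm_srsr] at h1; rw [comm_srsr] at h2; rw [comm_srsr] at h3
        have e1 := r.inj h1
        have e2 := r.inj h2
        have e3 := r.inj h3
        exact absurd (show 2 * s' = 0 by linear_combination e2 - e1 - e3) hg
    · rintro (ht | ht)
      · simp only [setA, Finset.mem_image, Finset.mem_univ, true_and] at ht
        obtain ⟨⟨j, b1, b2⟩, rfl⟩ := ht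
        refine ⟨?_, ?_, ?_⟩
        · rw [comm_rsr]; congr 1; linear_combination -(hcond hm b1)
        · rw [comm_rsr]; congr 1; linear_combination -(hcond hm b1)
        · rw [comm_srsr]; congr 1; linear_combination hcond hm b2
      · simp only [setC, Finset.mem_image, Finset.mem_univ, true_and] at ht
        obtain ⟨⟨i, b1, b2⟩, rfl⟩ := ht
        refine ⟨?_, ?_, ?_⟩
        · rw [comm_srsr]; congr 1; linear_combination hcond hm b1
        · rw [comm_srr]; congr 1; linear_combination hcond hm b2
        · rw [comm_srr]; congr 1; linear_combination hcond hm b2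
  rw [hset, Finset.card_union_of_disjoint (disjAC s'), card_setA hm, card_setC hm]
  ring

lemma count_even_eq (hm : n = 2 * m) (s' : ZMod n) (hg : 2 * s' ≠ 0)
    (h4 : 2 * (2 * s') = 0) : f3 (r (2 * s')) = 12 * n := by
  classical
  rw [f3_eq]
  have hset : (Finset.univ.filter
      (fun t : DihedralGroup n × DihedralGroup n × DihedralGroup n =>
        t.1⁻¹ * t.2.1⁻¹ * t.1 * t.2.1 = r (2 * s') ∧
        t.1⁻¹ * t.2.2⁻¹ * t.1 * t.2.2 = r (2 * s') ∧
        t.2.1⁻¹ * t.2.2⁻¹ * t.2.1 * t.2.2 = r (2 * s'))) =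
      setA m s' ∪ (setB m s' ∪ setC m s') := by
    ext t
    simp only [Finset.mem_filter, Finset.mem_univ, true_and, Finset.mem_union]
    constructor
    · rintro ⟨h1, h2, h3⟩
      obtain ⟨x, y, z⟩ := t
      dsimp only at h1 h2 h3
      rcases x with i | i <;> rcases y with j | j <;> rcases z with k | k
      · rw [comm_rr] at h1; exact absurd (r.inj h1).symm hg
      · rw [comm_rr] at h1; exact absurd (r.inj h1).symm hg
      · rw [comm_rr] at h2; exact absurd (r.inj h2).symm hg
      · rw [comm_rsr] at h1; rw [comm_srsr] at h3
        exact Or.inl (memA hm s' (r.inj h1) (r.inj h3))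
      · rw [comm_rr] at h3; exact absurd (r.inj h3).symm hg
      · rw [comm_srr] at h1; rw [comm_srsr] at h2
        exact Or.inr (Or.inl (memB hm s' (r.inj h1) (r.inj h2)))
      · rw [comm_srsr] at h1; rw [comm_srr] at h2
        exact Or.inr (Or.inr (memC hm s' (r.inj h1) (r.inj h2)))
      · rw [comm_srsr] at h1; rw [comm_srsr] at h2; rw [comm_srsr] at h3
        have e1 := r.inj h1
        have e2 := r.inj h2
        have e3 := r.inj h3
        exact absurd (show 2 * s' = 0 by linear_combination e2 - e1 - e3) hg
    · rintro (ht | ht | ht)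
      · simp only [setA, Finset.mem_image, Finset.mem_univ, true_and] at ht
        obtain ⟨⟨j, b1, b2⟩, rfl⟩ := ht
        refine ⟨?_, ?_, ?_⟩
        · rw [comm_rsr]; congr 1; linear_combination -(hcond hm b1)
        · rw [comm_rsr]; congr 1; linear_combination -(hcond hm b1)
        · rw [comm_srsr]; congr 1; linear_combination hcond hm b2
      · simp only [setB, Finset.mem_image, Finset.mem_univ, true_and] at ht
        obtain ⟨⟨i, b1, b2⟩, rfl⟩ := ht
        refine ⟨?_, ?_, ?_⟩
        · rw [comm_srr]; congr 1; linear_combination hcond hm b1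
        · rw [comm_srsr]; congr 1; linear_combination hcond hm b2
        · rw [comm_rsr]; congr 1; linear_combination -h4 - hcond hm b1
      · simp only [setC, Finset.mem_image, Finset.mem_univ, true_and] at ht
        obtain ⟨⟨i, b1, b2⟩, rfl⟩ := ht
        refine ⟨?_, ?_, ?_⟩
        · rw [comm_srsr]; congr 1; linear_combination hcond hm b1
        · rw [comm_srr]; congr 1; linear_combination hcond hm b2
        · rw [comm_srr]; congr 1; linear_combination hcond hm b2
  rw [hset, Finset.card_union_of_disjoint
      ((Finset.disjoint_union_right).mpr ⟨disjAB s', disjAC s'⟩),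
    Finset.card_union_of_disjoint (disjBC s'), card_setA hm, card_setB hm, card_setC hm]
  ring

end Even

end DihedralAux

theorem stmt14 (n : ℕ) (hn : 3 ≤ n) (s : ℕ) (hs : 0 < s) (hs2 : 2 * s < n) :
    (Odd n → f3 (DihedralGroup.r ((2 * s : ℕ) : ZMod n)) = 2 * n) ∧
    (Even n → 4 * s ≠ n → f3 (DihedralGroup.r ((2 * s : ℕ) : ZMod n)) = 8 * n) ∧
    (Even n → 4 * s = n → f3 (DihedralGroup.r ((2 * s : ℕ) : ZMod n)) = 12 * n) := by
  have hn0 : NeZero n := ⟨by omega⟩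
  have hcast : ((2 * s : ℕ) : ZMod n) = 2 * (s : ZMod n) := by push_cast; ring
  have hg : 2 * (s : ZMod n) ≠ 0 := by
    rw [← hcast, Ne, ZMod.natCast_eq_zero_iff]
    intro hd
    have := Nat.le_of_dvd (by omega) hd
    omega
  have hcast4 : 2 * (2 * (s : ZMod n)) = ((4 * s : ℕ) : ZMod n) := by push_cast; ring
  refine ⟨?_, ?_, ?_⟩
  · intro hodd
    rw [hcast]
    exact DihedralAux.count_odd hodd _ hg
  · intro heven h4
    obtain ⟨m, hm⟩ := heven
    have hm' : n = 2 * m := by omega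
    have h4' : 2 * (2 * (s : ZMod n)) ≠ 0 := by
      rw [hcast4, Ne, ZMod.natCast_eq_zero_iff]
      intro hd
      obtain ⟨c, hc⟩ := hd
      rcases Nat.lt_or_ge c 2 with hc2 | hc2
      · interval_cases c <;> omega
      · have := Nat.mul_le_mul_left n hc2
        omega
    rw [hcast]
    exact DihedralAux.count_even_ne hm' _ hg h4'
  · intro heven h4
    have hm' : n = 2 * (2 * s) := by omega
    have h4' : 2 * (2 * (s : ZMod n)) = 0 := by
      rw [hcast4, h4]
      exact ZMod.natCast_self n
    rw [hcast]
    exact DihedralAux.count_even_eq hm' _ hg h4'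
end

section
/- Let n ≥ 3 and let D_{2n} be the dihedral group of order 2n. If g lies in the commutator subgroup of D_{2n}, then f_3(g) > 0; that is, there exist x, y, z ∈ D_{2n} with [x,y] = [x,z] = [y,z] = g. -/
/-!
Every commutator of `D_{2n}` is a rotation through an even multiple, `r (2k)`. Conversely `r (2k)`
is the commutator of each pair from `(r (-k), sr 0, sr k)`: the two reflections `sr 0`, `sr k`
compose to `r k`, and conjugation by `r (-k)` shifts the index of each reflection by `-2k`.
-/

lemma f3_pos_iff {G : Type*} [Group G] [Finite G] (g : G) :
    0 < f3 g ↔ ∃ x y z : G, x⁻¹ * y⁻¹ * x * y = g ∧ x⁻¹ * z⁻¹ * x * z = g ∧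
      y⁻¹ * z⁻¹ * y * z = g := by
  simp [f3, Nat.card_pos_iff, Subtype.finite]

namespace DihedralGroup

open scoped commutatorElement

variable {n : ℕ}

lemma exists_commutatorElement_eq_r_two_mul (a b : DihedralGroup n) :
    ∃ k : ZMod n, ⁅a, b⁆ = r (2 * k) := by
  rcases a with a | a <;> rcases b with b | b
  · exact ⟨0, by simp [commutatorElement_def, inv_r, r_mul_r]⟩
  · exact ⟨a, by simp [commutatorElement_def, inv_r, inv_sr, r_mul_sr, sr_mul_r, sr_mul_sr]; ring⟩
  · exact ⟨-b, by simp [commutatorElement_def, inv_r, inv_sr, r_mul_r, sr_mul_r, sr_mul_sr]; ring⟩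
  · exact ⟨b - a, by simp [commutatorElement_def, inv_sr, sr_mul_sr]; ring⟩

lemma r_two_mul_mem_zpowers (k : ZMod n) : r (2 * k) ∈ Subgroup.zpowers (r 2 : DihedralGroup n) :=
  ⟨k.cast, by simp [r_zpow]⟩

lemma commutator_le_zpowers_r_two : commutator (DihedralGroup n) ≤ Subgroup.zpowers (r 2) := by
  rw [commutator, Subgroup.commutator_le]
  intro a _ b _
  obtain ⟨k, hk⟩ := exists_commutatorElement_eq_r_two_mul a b
  exact hk ▸ r_two_mul_mem_zpowers k

lemma f3_r_two_mul_pos [NeZero n] (k : ZMod n) : 0 < f3 (r (2 * k)) := by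
  refine (f3_pos_iff _).mpr ⟨r (-k), sr 0, sr k, ?_, ?_, ?_⟩ <;>
    simp [inv_r, inv_sr, r_mul_sr, sr_mul_r, sr_mul_sr] <;> ring

end DihedralGroup

theorem stmt15 (n : ℕ) (hn : 3 ≤ n) (g : DihedralGroup n)
    (hg : g ∈ commutator (DihedralGroup n)) :
    0 < f3 g := by
  have : NeZero n := ⟨by omega⟩
  obtain ⟨m, rfl⟩ := Subgroup.mem_zpowers_iff.mp (DihedralGroup.commutator_le_zpowers_r_two hg)
  rw [DihedralGroup.r_zpow]
  exact DihedralGroup.f3_r_two_mul_pos (m : ZMod n)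
end

section
/- Let G be a finite non-abelian group and let α = |Z(G)|/|G| (so α⁻¹ is the index of the center). Then P_3(1) ≤ (1/2)(P_2(1) − α) + α·P_2(1) ≤ 11/32. -/
/-- the number of ordered pairs `(x,y)` with `[x,y] = g`, where `[x,y] = x⁻¹y⁻¹xy`. -/
noncomputable def f2 {G : Type*} [Group G] (g : G) : ℕ :=
  Nat.card {p : G × G // p.1⁻¹ * p.2⁻¹ * p.1 * p.2 = g}

/-- `P₂(g) = f₂(g)/|G|²`. -/
noncomputable def P2 {G : Type*} [Group G] [Fintype G] (g : G) : ℝ :=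
  (f2 g : ℝ) / (Fintype.card G : ℝ) ^ 2

/-- `P₃(g) = f₃(g)/|G|³`. -/
noncomputable def P3 {G : Type*} [Group G] [Fintype G] (g : G) : ℝ :=
  (f3 g : ℝ) / (Fintype.card G : ℝ) ^ 3

section aux

variable {G : Type*} [Group G] [Fintype G]

private lemma comm_key (x y : G) : x⁻¹ * y⁻¹ * x * y = 1 ↔ x * y = y * x := by
  rw [mul_assoc, ← mul_inv_rev, inv_mul_eq_one, eq_comm]

open Classical in
/-- `f2 1` as a sum of centralizer sizes. -/
private lemma f2_one_eq :
    f2 (1 : G) = ∑ x : G, Nat.card {y : G // x * y = y * x} := by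
  have h1 : f2 (1 : G) = Nat.card {p : G × G // p.1 * p.2 = p.2 * p.1} :=
    Nat.card_congr (Equiv.subtypeEquivRight fun p => comm_key p.1 p.2)
  rw [h1, Nat.card_congr (Equiv.subtypeProdEquivSigmaSubtype fun x y : G => x * y = y * x),
    Nat.card_eq_fintype_card, Fintype.card_sigma]
  simp [Nat.card_eq_fintype_card]

open Classical in
private lemma f3_one_eq :
    f3 (1 : G) = ∑ x : G, Nat.card {q : G × G //
      x * q.1 = q.1 * x ∧ x * q.2 = q.2 * x ∧ q.1 * q.2 = q.2 * q.1} := by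
  have h1 : f3 (1 : G) = Nat.card {t : G × G × G //
      t.1 * t.2.1 = t.2.1 * t.1 ∧ t.1 * t.2.2 = t.2.2 * t.1 ∧ t.2.1 * t.2.2 = t.2.2 * t.2.1} :=
    Nat.card_congr (Equiv.subtypeEquivRight fun t =>
      and_congr (comm_key _ _) (and_congr (comm_key _ _) (comm_key _ _)))
  rw [h1, Nat.card_congr (Equiv.subtypeProdEquivSigmaSubtype
    (fun (x : G) (q : G × G) => x * q.1 = q.1 * x ∧ x * q.2 = q.2 * x ∧ q.1 * q.2 = q.2 * q.1)),
    Nat.card_eq_fintype_card, Fintype.card_sigma]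
  simp [Nat.card_eq_fintype_card]

/-- For non-central `x`, the centralizer has index at least 2. -/
private lemma two_mul_centralizer_le {x : G} (hx : x ∉ Subgroup.center G) :
    2 * Nat.card {y : G // x * y = y * x} ≤ Fintype.card G := by
  have hcx : Nat.card {y : G // x * y = y * x}
      = Nat.card (Subgroup.centralizer ({x} : Set G)) :=
    Nat.card_congr (Equiv.subtypeEquivRight fun y =>
      ⟨fun h => Subgroup.mem_centralizer_singleton_iff.2 h.symm,
       fun h => (Subgroup.mem_centralizer_singleton_iff.1 h).symm⟩)
  have hne : Subgroup.centralizer ({x} : Set G) ≠ ⊤ := by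
    intro h
    exact hx (Subgroup.mem_center_iff.2 fun g =>
      Subgroup.mem_centralizer_singleton_iff.1 (h ▸ Subgroup.mem_top g))
  have h0 : (Subgroup.centralizer ({x} : Set G)).index ≠ 0 :=
    Subgroup.index_ne_zero_of_finite
  have h1 : (Subgroup.centralizer ({x} : Set G)).index ≠ 1 := fun h =>
    hne (Subgroup.index_eq_one.1 h)
  have h2 : 2 ≤ (Subgroup.centralizer ({x} : Set G)).index := by omega
  have hpos : 0 < Nat.card (Subgroup.centralizer ({x} : Set G)) := Nat.card_pos
  have hmul := (Subgroup.centralizer ({x} : Set G)).card_mul_index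
  rw [hcx, ← Nat.card_eq_fintype_card, ← hmul]
  calc 2 * Nat.card (Subgroup.centralizer ({x} : Set G))
      ≤ (Subgroup.centralizer ({x} : Set G)).index
        * Nat.card (Subgroup.centralizer ({x} : Set G)) :=
        Nat.mul_le_mul_right _ h2
    _ = _ := mul_comm _ _

/-- index of the center is at least 4 for a nonabelian group. -/
private lemma four_mul_center_le (hG : ∃ a b : G, a * b ≠ b * a) :
    4 * Nat.card (Subgroup.center G) ≤ Fintype.card G := by
  obtain ⟨a, b, hab⟩ := hG
  set Z := Subgroup.center G with hZ
  have hmul := Z.card_mul_index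
  rw [← Nat.card_eq_fintype_card, ← hmul]
  have hpos : 0 < Nat.card Z := Nat.card_pos
  rcases Nat.lt_or_ge Z.index 4 with hlt | hge
  · exfalso
    have h0 : Z.index ≠ 0 := Subgroup.index_ne_zero_of_finite
    have h1 : Z.index ≠ 1 := by
      intro h
      have hb : b ∈ Z := by rw [Subgroup.index_eq_one.1 h]; exact Subgroup.mem_top b
      exact hab (Subgroup.mem_center_iff.1 hb a)
    have hcard : Nat.card (G ⧸ Z) = Z.index := Z.index_eq_card.symm
    have hprime : (Z.index).Prime := by
      have h23 : Z.index = 2 ∨ Z.index = 3 := by omega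
      rcases h23 with h | h <;> rw [h] <;> norm_num
    have : IsCyclic (G ⧸ Z) := by
      have : Fact (Z.index).Prime := ⟨hprime⟩
      exact isCyclic_of_prime_card hcard
    exact hab (commutative_of_cyclic_center_quotient (QuotientGroup.mk' Z)
      (by rw [QuotientGroup.ker_mk']) a b)
  · calc 4 * Nat.card Z ≤ Z.index * Nat.card Z := Nat.mul_le_mul_right _ hge
      _ = Nat.card Z * Z.index := mul_comm _ _

end aux

theorem stmt16 {G : Type*} [Group G] [Fintype G]
    (hG : ∃ a b : G, a * b ≠ b * a)
    (α : ℝ) (hα : α = (Nat.card (Subgroup.center G) : ℝ) / (Fintype.card G : ℝ)) :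
    P3 (1 : G) ≤ (1 / 2) * (P2 (1 : G) - α) + α * P2 (1 : G) ∧
    (1 / 2) * (P2 (1 : G) - α) + α * P2 (1 : G) ≤ 11 / 32 := by
  classical
  set n : ℕ := Fintype.card G with hn
  set z : ℕ := Nat.card (Subgroup.center G) with hz
  set c : G → ℕ := fun x => Nat.card {y : G // x * y = y * x} with hc
  set t : G → ℕ := fun x => Nat.card {q : G × G //
      x * q.1 = q.1 * x ∧ x * q.2 = q.2 * x ∧ q.1 * q.2 = q.2 * q.1} with ht
  -- central elements
  have hcen_c : ∀ x ∈ Subgroup.center G, c x = n := by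
    intro x hx
    have := Subgroup.mem_center_iff.1 hx
    have : ∀ y : G, x * y = y * x := fun y => (this y).symm
    simp only [hc]
    rw [Nat.card_congr (Equiv.subtypeUnivEquiv this), Nat.card_eq_fintype_card]
  have hcen_t : ∀ x ∈ Subgroup.center G, t x = f2 (1 : G) := by
    intro x hx
    have hx' : ∀ y : G, x * y = y * x := fun y => (Subgroup.mem_center_iff.1 hx y).symm
    have h1 : f2 (1 : G) = Nat.card {p : G × G // p.1 * p.2 = p.2 * p.1} :=
      Nat.card_congr (Equiv.subtypeEquivRight fun p => comm_key p.1 p.2)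
    simp only [ht, h1]
    exact Nat.card_congr (Equiv.subtypeEquivRight fun q =>
      ⟨fun h => h.2.2, fun h => ⟨hx' q.1, hx' q.2, h⟩⟩)
  -- non-central bounds
  have hnc_c : ∀ x ∉ Subgroup.center G, 2 * c x ≤ n := fun x hx =>
    two_mul_centralizer_le hx
  have ht_le : ∀ x : G, t x ≤ c x * c x := by
    intro x
    have : t x ≤ Nat.card ({y : G // x * y = y * x} × {y : G // x * y = y * x}) := by
      apply Nat.card_le_card_of_injective
        (fun q => (⟨q.1.1, q.2.1⟩, ⟨q.1.2, q.2.2.1⟩))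
      intro q q' h
      ext
      · exact congrArg (fun p => (p.1 : G)) h
      · exact congrArg (fun p => (p.2 : G)) h
    rwa [Nat.card_prod] at this
  -- the finset of central elements
  set S : Finset G := Finset.univ.filter (fun x => x ∈ Subgroup.center G) with hS
  have hScard : S.card = z := by
    rw [hz, Nat.card_eq_fintype_card, Fintype.card_subtype]
  set k : ℕ := (Finset.univ.filter (fun x => x ∉ Subgroup.center G)).card with hk
  have hzk : z + k = n := by
    rw [← hScard, hS, hk, hn]
    exact Finset.card_filter_add_card_filter_not _
  set M : ℕ := ∑ x ∈ Finset.univ.filter (fun x => x ∉ Subgroup.center G), c x with hM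
  -- F1 : f2 1 = z * n + M
  have hF1 : f2 (1 : G) = z * n + M := by
    rw [f2_one_eq, ← Finset.sum_filter_add_sum_filter_not Finset.univ
      (fun x => x ∈ Subgroup.center G) (fun x => Nat.card {y : G // x * y = y * x})]
    congr 1
    · rw [Finset.sum_congr rfl (fun x hx => hcen_c x (Finset.mem_filter.1 hx).2),
        Finset.sum_const, smul_eq_mul, hScard]
  -- F2 : 2 * f3 1 ≤ 2 * z * f2 1 + n * M
  have hF2 : 2 * f3 (1 : G) ≤ 2 * (z * f2 (1 : G)) + n * M := by
    rw [f3_one_eq, ← Finset.sum_filter_add_sum_filter_not Finset.univ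
      (fun x => x ∈ Subgroup.center G) t, Nat.mul_add]
    apply Nat.add_le_add
    · have hs : ∑ x ∈ Finset.univ.filter (fun x => x ∈ Subgroup.center G), t x
          = z * f2 (1 : G) := by
        rw [Finset.sum_congr rfl (fun x hx => hcen_t x (Finset.mem_filter.1 hx).2),
          Finset.sum_const, smul_eq_mul, hScard]
      rw [hs]
    · rw [hM, Finset.mul_sum, Finset.mul_sum]
      apply Finset.sum_le_sum
      intro x hx
      have hx' := (Finset.mem_filter.1 hx).2
      calc 2 * t x ≤ 2 * (c x * c x) := Nat.mul_le_mul_left _ (ht_le x)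
        _ = (2 * c x) * c x := by ring
        _ ≤ n * c x := Nat.mul_le_mul_right _ (hnc_c x hx')
  -- F3 : 2 * M ≤ k * n
  have hF3 : 2 * M ≤ k * n := by
    rw [hM, Finset.mul_sum, hk, ← smul_eq_mul, ← Finset.sum_const]
    apply Finset.sum_le_sum
    intro x hx
    exact hnc_c x ((Finset.mem_filter.1 hx).2)
  -- nat inequality A : 2 * f2 1 ≤ z * n + n * n
  have hA : 2 * f2 (1 : G) ≤ z * n + n * n := by
    calc 2 * f2 (1 : G) = 2 * (z * n) + 2 * M := by rw [hF1]; ring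
      _ ≤ 2 * (z * n) + k * n := Nat.add_le_add_left hF3 _
      _ = z * n + (z + k) * n := by ring
      _ = z * n + n * n := by rw [hzk]
  -- nat inequality C : 2 * f3 1 + z * n * n ≤ 2 * z * f2 1 + n * f2 1
  have hC : 2 * f3 (1 : G) + z * (n * n) ≤ 2 * (z * f2 (1 : G)) + n * f2 (1 : G) := by
    calc 2 * f3 (1 : G) + z * (n * n)
        ≤ 2 * (z * f2 (1 : G)) + n * M + z * (n * n) := Nat.add_le_add_right hF2 _
      _ = 2 * (z * f2 (1 : G)) + n * (M + z * n) := by ring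
      _ = 2 * (z * f2 (1 : G)) + n * f2 (1 : G) := by rw [hF1]; ring_nf
  have hB : 4 * z ≤ n := four_mul_center_le hG
  -- pass to the reals
  have hn0 : 0 < n := Fintype.card_pos
  have hnR : (0 : ℝ) < (n : ℝ) := by exact_mod_cast hn0
  have hAR : 2 * (f2 (1 : G) : ℝ) ≤ z * n + n * n := by exact_mod_cast hA
  have hCR : 2 * (f3 (1 : G) : ℝ) + z * (n * n)
      ≤ 2 * (z * (f2 (1 : G) : ℝ)) + n * (f2 (1 : G) : ℝ) := by exact_mod_cast hC
  have hBR : 4 * (z : ℝ) ≤ n := by exact_mod_cast hB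
  have hzR : (0 : ℝ) ≤ (z : ℝ) := Nat.cast_nonneg _
  have hf2R : (0 : ℝ) ≤ (f2 (1 : G) : ℝ) := Nat.cast_nonneg _
  have hP2 : P2 (1 : G) = (f2 (1 : G) : ℝ) / (n : ℝ) ^ 2 := rfl
  have hP3 : P3 (1 : G) = (f3 (1 : G) : ℝ) / (n : ℝ) ^ 3 := rfl
  have hαn : α = (z : ℝ) / n := hα
  constructor
  · rw [hP2, hP3, hαn, div_le_iff₀ (by positivity)]
    have hexp : ((1:ℝ) / 2 * ((f2 (1 : G) : ℝ) / (n : ℝ) ^ 2 - (z : ℝ) / n)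
        + (z : ℝ) / n * ((f2 (1 : G) : ℝ) / (n : ℝ) ^ 2)) * (n : ℝ) ^ 3
        = (2 * (z * (f2 (1 : G) : ℝ)) + n * (f2 (1 : G) : ℝ) - z * (n * n)) / 2 := by
      field_simp
      ring
    rw [hexp]
    linarith
  · rw [hP2, hαn]
    have hexp2 : (1:ℝ) / 2 * ((f2 (1 : G) : ℝ) / (n : ℝ) ^ 2 - (z : ℝ) / n)
        + (z : ℝ) / n * ((f2 (1 : G) : ℝ) / (n : ℝ) ^ 2)
        = ((f2 (1 : G) : ℝ) * n - z * (n : ℝ) ^ 2 + 2 * z * (f2 (1 : G) : ℝ))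
          / (2 * (n : ℝ) ^ 3) := by
      field_simp
    rw [hexp2, div_le_div_iff₀ (by positivity) (by norm_num)]
    have h1 := mul_le_mul_of_nonneg_right hAR hnR.le
    have h2 := mul_le_mul_of_nonneg_right hAR hzR
    have h3 := mul_le_mul_of_nonneg_right hBR (mul_nonneg hzR hnR.le)
    have h4 := mul_le_mul_of_nonneg_right hBR (mul_nonneg hnR.le hnR.le)
    nlinarith [h1, h2, h3, h4]
end

section
/- Let G be a finite group. Then for every g ∈ G, P_3(g) ≤ P_2(1) · √(|C_G(g)|/|G|). -/
lemma aux_comm {G : Type*} [Group G] {x y w g : G}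
    (h1 : x⁻¹ * y⁻¹ * x * y = g) (h2 : x⁻¹ * w⁻¹ * x * w = g) :
    Commute (y * w⁻¹) x := by
  have h : x⁻¹ * (y⁻¹ * (x * y)) = x⁻¹ * (w⁻¹ * (x * w)) := by
    simpa [mul_assoc] using h1.trans h2.symm
  have h' : y⁻¹ * (x * y) = w⁻¹ * (x * w) := mul_left_cancel h
  show (y * w⁻¹) * x = x * (y * w⁻¹)
  have : y * (w⁻¹ * (x * w)) * w⁻¹ = y * (y⁻¹ * (x * y)) * w⁻¹ := by rw [h']
  calc (y * w⁻¹) * x = y * (w⁻¹ * (x * w)) * w⁻¹ := by group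
    _ = y * (y⁻¹ * (x * y)) * w⁻¹ := this
    _ = x * (y * w⁻¹) := by group

/-- key counting bound: f3 g ≤ f2 1 * |C(g)| -/
lemma key_bound {G : Type*} [Group G] [Fintype G] (g : G) :
    Nat.card {t : G × G × G //
      t.1⁻¹ * t.2.1⁻¹ * t.1 * t.2.1 = g ∧
      t.1⁻¹ * t.2.2⁻¹ * t.1 * t.2.2 = g ∧
      t.2.1⁻¹ * t.2.2⁻¹ * t.2.1 * t.2.2 = g} ≤
    Nat.card {p : G × G // p.1⁻¹ * p.2⁻¹ * p.1 * p.2 = (1 : G)} *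
      Nat.card (Subgroup.centralizer ({g} : Set G)) := by
  classical
  set C := Subgroup.centralizer ({g} : Set G)
  -- canonical choices
  let y0 : G → G := fun x => if h : ∃ w : G, x⁻¹ * w⁻¹ * x * w = g then h.choose else 1
  let z0 : G → G → G := fun x y =>
    if h : ∃ w : G, x⁻¹ * w⁻¹ * x * w = g ∧ y⁻¹ * w⁻¹ * y * w = g then h.choose else 1
  have hy0 : ∀ x : G, (∃ w : G, x⁻¹ * w⁻¹ * x * w = g) → x⁻¹ * (y0 x)⁻¹ * x * (y0 x) = g := by
    intro x h
    simp only [y0, dif_pos h]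
    exact h.choose_spec
  have hz0 : ∀ x y : G, (h : ∃ w : G, x⁻¹ * w⁻¹ * x * w = g ∧ y⁻¹ * w⁻¹ * y * w = g) →
      x⁻¹ * (z0 x y)⁻¹ * x * (z0 x y) = g ∧ y⁻¹ * (z0 x y)⁻¹ * y * (z0 x y) = g := by
    intro x y h
    simp only [z0, dif_pos h]
    exact h.choose_spec
  have keyF : ∀ t : {t : G × G × G //
      t.1⁻¹ * t.2.1⁻¹ * t.1 * t.2.1 = g ∧
      t.1⁻¹ * t.2.2⁻¹ * t.1 * t.2.2 = g ∧
      t.2.1⁻¹ * t.2.2⁻¹ * t.2.1 * t.2.2 = g},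
      (t.1.1⁻¹ * (t.1.2.1 * (y0 t.1.1)⁻¹)⁻¹ * t.1.1 * (t.1.2.1 * (y0 t.1.1)⁻¹) = (1:G))
      ∧ t.1.2.2 * (z0 t.1.1 t.1.2.1)⁻¹ ∈ C := by
    rintro ⟨⟨x, y, z⟩, hxy, hxz, hyz⟩
    have hy := hy0 x ⟨y, hxy⟩
    have hz := hz0 x y ⟨z, hxz, hyz⟩
    constructor
    · have e : (y * (y0 x)⁻¹) * x = x * (y * (y0 x)⁻¹) := aux_comm hxy hy
      show x⁻¹ * (y * (y0 x)⁻¹)⁻¹ * x * (y * (y0 x)⁻¹) = 1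
      rw [mul_assoc, ← e]
      group
    · have hcx : Commute (z * (z0 x y)⁻¹) x := aux_comm hxz hz.1
      have hcy : Commute (z * (z0 x y)⁻¹) y := aux_comm hyz hz.2
      have : Commute (z * (z0 x y)⁻¹) g := by
        rw [← hxy]
        exact ((hcx.inv_right.mul_right hcy.inv_right).mul_right hcx).mul_right hcy
      rw [Subgroup.mem_centralizer_singleton_iff]
      exact this.eq
  let F : {t : G × G × G //
      t.1⁻¹ * t.2.1⁻¹ * t.1 * t.2.1 = g ∧
      t.1⁻¹ * t.2.2⁻¹ * t.1 * t.2.2 = g ∧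
      t.2.1⁻¹ * t.2.2⁻¹ * t.2.1 * t.2.2 = g} →
      {p : G × G // p.1⁻¹ * p.2⁻¹ * p.1 * p.2 = (1 : G)} × C :=
    fun t => (⟨(t.1.1, t.1.2.1 * (y0 t.1.1)⁻¹), (keyF t).1⟩, ⟨t.1.2.2 * (z0 t.1.1 t.1.2.1)⁻¹, (keyF t).2⟩)
  have hinj : Function.Injective F := by
    rintro ⟨⟨x1, y1, z1⟩, h1⟩ ⟨⟨x2, y2, z2⟩, h2⟩ h
    simp only [F, Prod.mk.injEq, Subtype.mk.injEq] at h
    obtain ⟨⟨hx, hy⟩, hz⟩ := h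
    subst hx
    have hy' : y1 = y2 := by
      have := mul_right_cancel hy
      exact this
    subst hy'
    have hz' : z1 = z2 := mul_right_cancel hz
    subst hz'
    rfl
  calc _ ≤ Nat.card ({p : G × G // p.1⁻¹ * p.2⁻¹ * p.1 * p.2 = (1 : G)} × C) :=
        Nat.card_le_card_of_injective F hinj
    _ = _ := Nat.card_prod _ _

theorem stmt18 {G : Type*} [Group G] [Fintype G] (g : G) :
    P3 g ≤ P2 (1 : G) *
      Real.sqrt ((Nat.card (Subgroup.centralizer ({g} : Set G)) : ℝ) /
        (Fintype.card G : ℝ)) := by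
  have hn : (0:ℝ) < (Fintype.card G : ℝ) := by exact_mod_cast Fintype.card_pos
  set n : ℝ := (Fintype.card G : ℝ) with hn_def
  set c : ℝ := (Nat.card (Subgroup.centralizer ({g} : Set G)) : ℝ) with hc_def
  have hc0 : (0:ℝ) ≤ c := by positivity
  have hcn : c ≤ n := by
    rw [hc_def, hn_def, ← Nat.card_eq_fintype_card]
    exact_mod_cast Subgroup.card_le_card_group _
  have ht0 : (0:ℝ) ≤ c / n := by positivity
  have ht1 : c / n ≤ 1 := (div_le_one hn).mpr hcn
  have ht : c / n ≤ Real.sqrt (c / n) := by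
    nlinarith [Real.sq_sqrt ht0, Real.sqrt_nonneg (c / n)]
  have hkey : (f3 g : ℝ) ≤ (f2 (1 : G) : ℝ) * c := by
    rw [hc_def, ← Nat.cast_mul]
    exact_mod_cast key_bound g
  calc P3 g = (f3 g : ℝ) / n ^ 3 := rfl
    _ ≤ ((f2 (1 : G) : ℝ) * c) / n ^ 3 := by
        gcongr
    _ = ((f2 (1 : G) : ℝ) / n ^ 2) * (c / n) := by rw [div_mul_div_comm, ← pow_succ]
    _ ≤ ((f2 (1 : G) : ℝ) / n ^ 2) * Real.sqrt (c / n) := by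
        apply mul_le_mul_of_nonneg_left ht (by positivity)
    _ = P2 (1 : G) * Real.sqrt (c / n) := rfl
end
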